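/- arXiv:2012.01341 — 2 statements merged into one kernel-verified Lean document; each statement's English description precedes it below -/
import Mathlib

section
/- For every natural number n, the function u_n defined by Rodrigues' formula u_n(x) = d^n/dx^n[(x^2 - 1)^n] is a nonzero polynomial function satisfying the Legendre-type eigenvalue equation -((1 - x^2) u_n'(x))' + (1/4) u_n(x) = (n(n+1) + 1/4) u_n(x) for all real x, and it satisfies the Friedrichs boundary conditions lim_{x -> 1^-} (1 - x^2) u_n'(x) = 0 and lim_{x -> -1^+} (1 - x^2) u_n'(x) = 0. -/
/-!
The computation is purely polynomial. With `W = (X² - 1)ⁿ` one has `(X² - 1) W' = 2n X W`;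
differentiating this `n + 1` times by Leibniz' rule gives
`(X² - 1) P'' + 2X P' = n(n + 1) P` for `P = W⁽ⁿ⁾`, i.e. `((1 - X²) P')' = -n(n + 1) P`.
`P ≠ 0` because `W` has degree `2n ≥ n` and we are in characteristic zero.
The flux `(1 - x²) P'(x)` is a polynomial vanishing at `±1`, hence the boundary conditions.
-/

open Polynomial

namespace Polynomial

variable {R : Type*}

theorem mul_derivative_pow [CommSemiring R] (p : R[X]) (n : ℕ) :
    p * derivative (p ^ n) = C (n : R) * derivative p * p ^ n := by
  cases n with
  | zero => simp
  | succ n => rw [derivative_pow_succ, Nat.cast_succ]; ring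

theorem derivative_X_sq_sub_one [CommRing R] : derivative (X ^ 2 - 1 : R[X]) = 2 * X := by
  simp [one_add_one_eq_two, ← C_ofNat]

theorem X_sq_sub_one_mul_iterate_derivative_add_two [CommRing R] {f : R[X]} {a : R}
    (hf : (X ^ 2 - 1) * derivative f = C a * X * f) (k : ℕ) :
    (X ^ 2 - 1) * derivative^[k + 2] f =
      C (a - 2 * (k + 1)) * X * derivative^[k + 1] f +
        C ((k + 1) * (a - k)) * derivative^[k] f := by
  induction k with
  | zero =>
    have h := congrArg derivative hf
    simp only [derivative_mul, derivative_X_sq_sub_one, derivative_C, derivative_X] at h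
    simp only [Function.iterate_succ_apply', Function.iterate_zero_apply, Nat.cast_zero,
      map_sub, map_mul, map_add, map_ofNat, map_one, map_zero]
    linear_combination h
  | succ k ih =>
    have h := congrArg derivative ih
    simp only [derivative_mul, derivative_add, derivative_X_sq_sub_one, derivative_C, derivative_X,
      ← Function.iterate_succ_apply' derivative] at h
    simp only [Nat.cast_succ, map_sub, map_mul, map_add, map_ofNat, map_one, map_natCast] at h ⊢
    linear_combination h

/-- `2ⁿ n!` times the `n`-th Legendre polynomial. -/
noncomputable def rodrigues (R : Type*) [CommRing R] (n : ℕ) : R[X] :=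
  derivative^[n] ((X ^ 2 - 1) ^ n)

theorem derivative_X_sq_sub_one_mul_derivative_rodrigues [CommRing R] (n : ℕ) :
    derivative ((X ^ 2 - 1) * derivative (rodrigues R n)) =
      C ((n : R) * (n + 1)) * rodrigues R n := by
  have hW : (X ^ 2 - 1) * derivative ((X ^ 2 - 1 : R[X]) ^ n) =
      C (2 * n : R) * X * (X ^ 2 - 1) ^ n := by
    rw [mul_derivative_pow, derivative_X_sq_sub_one, map_mul, map_ofNat]; ring
  have h := X_sq_sub_one_mul_iterate_derivative_add_two hW n
  simp only [rodrigues, derivative_mul, derivative_X_sq_sub_one,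
    ← Function.iterate_succ_apply' derivative] at h ⊢
  simp only [map_sub, map_mul, map_add, map_ofNat, map_one, map_natCast] at h ⊢
  linear_combination h

theorem natDegree_iterate_derivative_eq [Semiring R] [IsAddTorsionFree R] (p : R[X]) (k : ℕ) :
    (derivative^[k] p).natDegree = p.natDegree - k := by
  induction k with
  | zero => rfl
  | succ k ih => rw [Function.iterate_succ_apply', natDegree_derivative, ih, Nat.sub_sub]

theorem iterate_derivative_ne_zero [Semiring R] [IsAddTorsionFree R] {p : R[X]} (hp : p ≠ 0)
    {k : ℕ} (hk : k ≤ p.natDegree) : derivative^[k] p ≠ 0 := by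
  cases k with
  | zero => exact hp
  | succ k =>
    rw [Function.iterate_succ_apply', derivative_ne_zero, natDegree_iterate_derivative_eq]
    omega

theorem rodrigues_ne_zero [CommRing R] [IsDomain R] [CharZero R] (n : ℕ) :
    rodrigues R n ≠ 0 := by
  have hX : (X ^ 2 - 1 : R[X]) = X ^ 2 - C 1 := by rw [C_1]
  refine iterate_derivative_ne_zero (pow_ne_zero _ (hX ▸ X_pow_sub_C_ne_zero two_pos 1)) ?_
  rw [natDegree_pow, hX, natDegree_X_pow_sub_C]
  omega

theorem iteratedDeriv_eval {𝕜 : Type*} [NontriviallyNormedField 𝕜] (p : 𝕜[X]) (k : ℕ) :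
    iteratedDeriv k (fun x => p.eval x) = fun x => (derivative^[k] p).eval x := by
  induction k with
  | zero => simp
  | succ k ih =>
    funext x
    rw [iteratedDeriv_succ, ih, Function.iterate_succ_apply', Polynomial.deriv]

end Polynomial

/-- **Legendre eigenproblem via Rodrigues' formula.**
For every natural number `n`, the function `u n x = d^n/dx^n [(x^2-1)^n]` is a nonzero
polynomial function satisfying `-((1-x^2) u')' + (1/4) u = (n(n+1)+1/4) u` on `ℝ`, and it
satisfies the Friedrichs boundary conditions
`lim_{x→1⁻} (1-x^2) u'(x) = 0` and `lim_{x→-1⁺} (1-x^2) u'(x) = 0`. -/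
theorem legendre_rodrigues_eigenpair (n : ℕ) :
    (∃ p : Polynomial ℝ, p ≠ 0 ∧
      ∀ x : ℝ, iteratedDeriv n (fun y : ℝ => (y ^ 2 - 1) ^ n) x = p.eval x) ∧
    (∀ x : ℝ,
      -(deriv (fun y : ℝ =>
          (1 - y ^ 2) * deriv (iteratedDeriv n (fun z : ℝ => (z ^ 2 - 1) ^ n)) y) x)
        + (1 / 4) * iteratedDeriv n (fun y : ℝ => (y ^ 2 - 1) ^ n) x
      = ((n : ℝ) * ((n : ℝ) + 1) + 1 / 4)
          * iteratedDeriv n (fun y : ℝ => (y ^ 2 - 1) ^ n) x) ∧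
    Filter.Tendsto
      (fun x : ℝ =>
        (1 - x ^ 2) * deriv (iteratedDeriv n (fun z : ℝ => (z ^ 2 - 1) ^ n)) x)
      (nhdsWithin 1 (Set.Iio 1)) (nhds 0) ∧
    Filter.Tendsto
      (fun x : ℝ =>
        (1 - x ^ 2) * deriv (iteratedDeriv n (fun z : ℝ => (z ^ 2 - 1) ^ n)) x)
      (nhdsWithin (-1) (Set.Ioi (-1))) (nhds 0) := by
  set P := rodrigues ℝ n
  have hu : iteratedDeriv n (fun y : ℝ => (y ^ 2 - 1) ^ n) = fun x => P.eval x := by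
    have hW : (fun y : ℝ => (y ^ 2 - 1) ^ n) = fun x => ((X ^ 2 - 1 : ℝ[X]) ^ n).eval x := by
      simp only [eval_pow, eval_sub, eval_X, eval_one]
    rw [hW, iteratedDeriv_eval]
    rfl
  have hflux : (fun x : ℝ =>
      (1 - x ^ 2) * deriv (iteratedDeriv n (fun z : ℝ => (z ^ 2 - 1) ^ n)) x) =
      fun x => (-((X ^ 2 - 1) * derivative P)).eval x := by
    funext x
    simp only [hu, Polynomial.deriv, eval_neg, eval_mul, eval_sub, eval_pow, eval_X, eval_one]
    ring
  have hcont : Continuous fun x : ℝ => (-((X ^ 2 - 1) * derivative P)).eval x :=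
    Polynomial.continuous _
  refine ⟨⟨P, rodrigues_ne_zero n, fun x => by rw [hu]⟩, fun x => ?_, ?_, ?_⟩
  · rw [hflux, Polynomial.deriv, derivative_neg,
      derivative_X_sq_sub_one_mul_derivative_rodrigues, hu]
    simp only [eval_neg, eval_mul, eval_C]
    ring
  · rw [hflux]
    simpa using (hcont.tendsto 1).mono_left nhdsWithin_le_nhds
  · rw [hflux]
    simpa using (hcont.tendsto (-1)).mono_left nhdsWithin_le_nhds
end

section
/- For each n in {0, 1, 2, 3, 4} there exists a function u : (0, infinity) -> R, not identically zero, twice continuously differentiable on (0, infinity), satisfying -u''(x) + ((-242 cosh(x) + 241)/(4 sinh(x)^2)) u(x) = -(5 - n)^2 u(x) for all x > 0, together with the boundary conditions lim_{x -> 0^+}(u(x) + x u'(x)) = 0 and lim_{x -> infinity} u(x) = 0; that is, the discrete eigenvalues of the Dunford-Schwartz eigenproblem are lambda_n = -(5 - n)^2 for n = 0, 1, 2, 3, 4. -/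
/-!
In half-angle variables the potential is `-(1/16)/sinh²(x/2) - (483/16)/cosh²(x/2)`, a
Pöschl–Teller potential. The substitution `u x = √(sinh x) · P(t) / cosh(x/2)^11` with
`t = cosh²(x/2)` turns `-u'' + V u = E u` into the hypergeometric equation
`t(t-1) P'' + (10 - 9t) P' + (25 + E) P = 0`, which for `E = -(5-n)²` has the polynomial solution
`P = ₂F₁(-n, n-10; -10; t)` of degree `n`. The factor `√(sinh x)` gives the boundary condition at
`0`, and `u x` behaves like `e^{-(5-n)x}` at infinity, so it decays as long as `n ≤ 4`.
-/

open Real Filter Set Topology Polynomial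

namespace DunfordSchwartz

theorem hasDerivAt_sqrt_sinh {x : ℝ} (hx : 0 < x) :
    HasDerivAt (fun y => √(sinh y)) (cosh x / (2 * √(sinh x))) x := by
  simpa [div_eq_inv_mul] using (hasDerivAt_sinh x).sqrt (sinh_pos_iff.mpr hx).ne'

theorem hasDerivAt_sqrt_sinh_mul {g : ℝ → ℝ} {g' x : ℝ} (hx : 0 < x) (hg : HasDerivAt g g' x) :
    HasDerivAt (fun y => √(sinh y) * g y) (cosh x / (2 * √(sinh x)) * g x + √(sinh x) * g') x :=
  (hasDerivAt_sqrt_sinh hx).mul hg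

theorem tendsto_div_sqrt_sinh_nhdsGT_zero :
    Tendsto (fun x => x / √(sinh x)) (𝓝[>] 0) (𝓝 0) := by
  have hsqrt : Tendsto (fun x : ℝ => √x) (𝓝[>] 0) (𝓝 0) := by
    simpa using (continuous_sqrt.tendsto 0).mono_left nhdsWithin_le_nhds
  refine squeeze_zero' ?_ ?_ hsqrt
  · filter_upwards [self_mem_nhdsWithin] with x (hx : 0 < x)
    positivity
  · filter_upwards [self_mem_nhdsWithin] with x (hx : 0 < x)
    have hle : √x ≤ √(sinh x) := sqrt_le_sqrt (self_le_sinh_iff.mpr hx.le)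
    rw [div_le_iff₀ ((sqrt_pos.mpr hx).trans_le hle)]
    calc x = √x * √x := (mul_self_sqrt hx.le).symm
      _ ≤ √x * √(sinh x) := by gcongr

theorem tendsto_sqrt_sinh_mul_add_mul_deriv {g g₁ : ℝ → ℝ}
    (hg : ∀ y, 0 < y → HasDerivAt g (g₁ y) y) (hg0 : ContinuousWithinAt g (Ioi 0) 0)
    (hg₁0 : ContinuousWithinAt g₁ (Ioi 0) 0) :
    Tendsto (fun x => √(sinh x) * g x + x * deriv (fun y => √(sinh y) * g y) x)
      (𝓝[>] 0) (𝓝 0) := by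
  have hsqrt : Tendsto (fun x => √(sinh x)) (𝓝[>] 0) (𝓝 0) := by
    simpa using (continuous_sinh.sqrt.tendsto 0).mono_left nhdsWithin_le_nhds
  have hcosh : Tendsto cosh (𝓝[>] 0) (𝓝 (cosh 0)) := continuous_cosh.continuousWithinAt
  have hid : Tendsto (fun x : ℝ => x) (𝓝[>] 0) (𝓝 0) := nhdsWithin_le_nhds
  have hlim := (hsqrt.mul hg0).add ((tendsto_div_sqrt_sinh_nhdsGT_zero.mul
    ((hcosh.mul hg0).div_const 2)).add (hid.mul (hsqrt.mul hg₁0)))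
  simp only [zero_mul, mul_zero, add_zero] at hlim
  refine hlim.congr' ?_
  filter_upwards [self_mem_nhdsWithin] with x (hx : 0 < x)
  rw [(hasDerivAt_sqrt_sinh_mul hx (hg x hx)).deriv]
  ring

/-- `-4 sinh(x)^(3/2) (-u'' + V u - E u)` at `x` for `u = √sinh · g`, in terms of the values
`g`, `g'`, `g''` of `g` and its first two derivatives at `x`. -/
noncomputable def liouvilleForm (V E x g g' g'' : ℝ) : ℝ :=
  4 * sinh x ^ 2 * g'' + 4 * sinh x * cosh x * g'
    + (2 * sinh x ^ 2 - cosh x ^ 2 + 4 * (E - V) * sinh x ^ 2) * g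

theorem eigen_eq_of_liouvilleForm_eq_zero {g g₁ g₂ : ℝ → ℝ} {V E x : ℝ}
    (hg : ∀ y, 0 < y → HasDerivAt g (g₁ y) y) (hg₁ : ∀ y, 0 < y → HasDerivAt g₁ (g₂ y) y)
    (hx : 0 < x) (h : liouvilleForm V E x (g x) (g₁ x) (g₂ x) = 0) :
    -deriv (deriv fun y => √(sinh y) * g y) x + V * (√(sinh x) * g x)
      = E * (√(sinh x) * g x) := by
  have hs : 0 < sinh x := sinh_pos_iff.mpr hx
  have hderiv : deriv (fun y => √(sinh y) * g y) =ᶠ[𝓝 x]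
      fun y => cosh y / (2 * √(sinh y)) * g y + √(sinh y) * g₁ y := by
    filter_upwards [Ioi_mem_nhds hx] with y hy
    exact (hasDerivAt_sqrt_sinh_mul hy (hg y hy)).deriv
  have hderiv₂ :
      HasDerivAt (fun y => cosh y / (2 * √(sinh y)) * g y + √(sinh y) * g₁ y) _ x :=
    (((hasDerivAt_cosh x).div ((hasDerivAt_sqrt_sinh hx).const_mul 2) (by positivity)).mul
      (hg x hx)).add (hasDerivAt_sqrt_sinh_mul hx (hg₁ x hx))
  rw [hderiv.deriv_eq, hderiv₂.deriv, Pi.div_apply]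
  unfold liouvilleForm at h
  have hsr : sinh x = √(sinh x) ^ 2 := (sq_sqrt hs.le).symm
  set r := √(sinh x)
  rw [hsr] at h ⊢
  linear_combination (norm := skip) -h / (4 * r ^ 3)
  field_simp
  ring

noncomputable def coshHalfQuot (Q : ℝ[X]) (m : ℕ) (x : ℝ) : ℝ :=
  Q.eval (cosh (x / 2) ^ 2) / cosh (x / 2) ^ m

noncomputable def derivPoly (m : ℕ) (Q : ℝ[X]) : ℝ[X] := 2 * X * derivative Q - (m : ℝ[X]) * Q

theorem continuous_coshHalfQuot (Q : ℝ[X]) (m : ℕ) : Continuous (coshHalfQuot Q m) :=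
  ((Q.continuous.comp (by fun_prop)).div (by fun_prop)) fun _ => pow_ne_zero m (cosh_pos _).ne'

theorem contDiff_coshHalfQuot (Q : ℝ[X]) (m : ℕ) (n : WithTop ℕ∞) :
    ContDiff ℝ n (coshHalfQuot Q m) := by
  have hQ : ContDiff ℝ n fun t => Q.eval t := by
    simpa only [aeval_def, eval₂_eq_eval_map, Algebra.algebraMap_self, Polynomial.map_id] using
      Q.contDiff_aeval (𝕜 := ℝ) n
  exact (hQ.comp (by fun_prop)).div (by fun_prop) fun _ => pow_ne_zero m (cosh_pos _).ne'

theorem hasDerivAt_coshHalfQuot (Q : ℝ[X]) (m : ℕ) (x : ℝ) :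
    HasDerivAt (coshHalfQuot Q m)
      (sinh (x / 2) / 2 * coshHalfQuot (derivPoly m Q) (m + 1) x) x := by
  have hc : HasDerivAt (fun y => cosh (y / 2)) (sinh (x / 2) * (1 / 2)) x :=
    ((hasDerivAt_id x).div_const 2).cosh
  have hc0 : cosh (x / 2) ≠ 0 := (cosh_pos _).ne'
  refine (((Q.hasDerivAt _).comp x (hc.pow 2)).div (hc.pow m) (pow_ne_zero m hc0)).congr_deriv ?_
  rcases m with _ | m
  · simp [coshHalfQuot, derivPoly]
    field_simp
  · simp only [coshHalfQuot, derivPoly, eval_sub, eval_mul, eval_X, eval_natCast, eval_ofNat,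
      Function.comp_apply, Pi.pow_apply, Nat.add_sub_cancel]
    field_simp
    ring

theorem hasDerivAt_sinh_half_mul_coshHalfQuot (Q : ℝ[X]) (m : ℕ) (x : ℝ) :
    HasDerivAt (fun y => sinh (y / 2) / 2 * coshHalfQuot Q m y)
      (cosh (x / 2) / 4 * coshHalfQuot Q m x
        + sinh (x / 2) / 2 * (sinh (x / 2) / 2 * coshHalfQuot (derivPoly m Q) (m + 1) x)) x := by
  have hs : HasDerivAt (fun y => sinh (y / 2) / 2) (cosh (x / 2) * (1 / 2) / 2) x :=
    ((hasDerivAt_id x).div_const 2).sinh.div_const 2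
  exact (hs.mul (hasDerivAt_coshHalfQuot Q m x)).congr_deriv (by ring)

theorem tendsto_cosh_half_sq_atTop : Tendsto (fun x => cosh (x / 2) ^ 2) atTop atTop := by
  refine tendsto_atTop_mono (fun x => ?_)
    (tendsto_exp_atTop.atTop_div_const (by norm_num : (0 : ℝ) < 4))
  have h : exp (x / 2) ≤ 2 * cosh (x / 2) := by
    rw [cosh_eq]
    linarith [exp_pos (-(x / 2))]
  calc exp x / 4 = (exp (x / 2) / 2) ^ 2 := by rw [div_pow, sq, ← exp_add]; ring_nf
    _ ≤ cosh (x / 2) ^ 2 := by gcongr; linarith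

/-- Gauss's hypergeometric operator `t(1-t) P'' + (c - (a+b+1) t) P' - ab P`, negated, for
`c = -10` and `a + b = -10`; with `μ = ab = n(10-n)` it is solved by `₂F₁(-n, n-10; -10; t)`. -/
noncomputable def hypergeometricOp (μ : ℝ) (P : ℝ[X]) : ℝ[X] :=
  X * (X - 1) * derivative (derivative P) + (10 - 9 * X) * derivative P + C μ * P

theorem liouvilleForm_coshHalfQuot (P : ℝ[X]) (E : ℝ) {x : ℝ} (hx : x ≠ 0) :
    liouvilleForm ((-242 * cosh x + 241) / (4 * sinh x ^ 2)) E x (coshHalfQuot P 11 x)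
      (sinh (x / 2) / 2 * coshHalfQuot (derivPoly 11 P) 12 x)
      (cosh (x / 2) / 4 * coshHalfQuot (derivPoly 11 P) 12 x
        + sinh (x / 2) / 2 * (sinh (x / 2) / 2
          * coshHalfQuot (derivPoly 12 (derivPoly 11 P)) 13 x))
      = 4 * sinh x ^ 2 / cosh (x / 2) ^ 11
        * (hypergeometricOp (25 + E) P).eval (cosh (x / 2) ^ 2) := by
  obtain ⟨y, rfl⟩ : ∃ y, x = 2 * y := ⟨x / 2, by ring⟩
  have hs : sinh y ≠ 0 := sinh_ne_zero.mpr (by simpa using hx)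
  have hc : cosh y ≠ 0 := (cosh_pos _).ne'
  have hsc : sinh y ^ 2 = cosh y ^ 2 - 1 := by rw [cosh_sq]; ring
  rw [liouvilleForm, sinh_two_mul, cosh_two_mul]
  simp only [coshHalfQuot, derivPoly, hypergeometricOp, eval_add, eval_sub, eval_mul, eval_X,
    eval_ofNat, eval_C, eval_zero, eval_one, derivative_mul, derivative_sub, derivative_X,
    derivative_ofNat, Nat.cast_ofNat, mul_div_cancel_left₀ _ (two_ne_zero' ℝ)]
  field_simp
  rw [hsc]
  ring

noncomputable def eigenfunction (P : ℝ[X]) (x : ℝ) : ℝ := √(sinh x) * coshHalfQuot P 11 x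

theorem eigenfunction_ode {P : ℝ[X]} {E x : ℝ} (hP : hypergeometricOp (25 + E) P = 0)
    (hx : 0 < x) :
    -deriv (deriv (eigenfunction P)) x
      + (-242 * cosh x + 241) / (4 * sinh x ^ 2) * eigenfunction P x = E * eigenfunction P x := by
  refine eigen_eq_of_liouvilleForm_eq_zero (fun y _ => hasDerivAt_coshHalfQuot P 11 y)
    (fun y _ => hasDerivAt_sinh_half_mul_coshHalfQuot _ 12 y) hx ?_
  rw [liouvilleForm_coshHalfQuot P E hx.ne', hP, eval_zero, mul_zero]

theorem contDiffOn_eigenfunction (P : ℝ[X]) (n : WithTop ℕ∞) :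
    ContDiffOn ℝ n (eigenfunction P) (Ioi 0) := by
  intro x (hx : 0 < x)
  have hsqrt : ContDiffAt ℝ n (fun y => √(sinh y)) x :=
    (contDiffAt_sqrt (sinh_pos_iff.mpr hx).ne').comp x contDiff_sinh.contDiffAt
  exact (hsqrt.mul (contDiff_coshHalfQuot P 11 n).contDiffAt).contDiffWithinAt

theorem tendsto_eigenfunction_add_mul_deriv (P : ℝ[X]) :
    Tendsto (fun x => eigenfunction P x + x * deriv (eigenfunction P) x) (𝓝[>] 0) (𝓝 0) :=
  tendsto_sqrt_sinh_mul_add_mul_deriv (fun y _ => hasDerivAt_coshHalfQuot P 11 y)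
    (continuous_coshHalfQuot P 11).continuousWithinAt
    (((continuous_sinh.comp (continuous_id.div_const 2)).div_const 2).mul
      (continuous_coshHalfQuot _ 12)).continuousWithinAt

theorem exists_pos_eigenfunction_ne_zero {P : ℝ[X]} (hP : P ≠ 0) :
    ∃ x, 0 < x ∧ eigenfunction P x ≠ 0 := by
  obtain ⟨x, hroot, hx⟩ := ((tendsto_cosh_half_sq_atTop.eventually
    (P.eventually_atTop_not_isRoot hP)).and (eventually_gt_atTop 0)).exists
  exact ⟨x, hx, mul_ne_zero (sqrt_pos.mpr (sinh_pos_iff.mpr hx)).ne'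
    (div_ne_zero hroot (pow_ne_zero 11 (cosh_pos _).ne'))⟩

theorem abs_eigenfunction_le (P : ℝ[X]) (x : ℝ) :
    |eigenfunction P x| ≤ √2 * |P.eval (cosh (x / 2) ^ 2) / (cosh (x / 2) ^ 2) ^ 5| := by
  have hc : 0 < cosh (x / 2) := cosh_pos _
  have hsinh : √(sinh x) ≤ √2 * cosh (x / 2) := by
    rw [← sqrt_sq hc.le, ← sqrt_mul zero_le_two]
    refine sqrt_le_sqrt ?_
    have h2 : sinh x = 2 * sinh (x / 2) * cosh (x / 2) := by rw [← sinh_two_mul]; ring_nf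
    rw [h2]
    nlinarith [sinh_lt_cosh (x / 2)]
  rw [eigenfunction, coshHalfQuot, abs_mul, abs_of_nonneg (sqrt_nonneg _), abs_div, abs_div,
    abs_of_pos (pow_pos hc 11), abs_of_pos (pow_pos (pow_pos hc 2) 5)]
  calc √(sinh x) * (|P.eval (cosh (x / 2) ^ 2)| / cosh (x / 2) ^ 11)
      ≤ √2 * cosh (x / 2) * (|P.eval (cosh (x / 2) ^ 2)| / cosh (x / 2) ^ 11) := by gcongr
    _ = _ := by field_simp

theorem tendsto_eigenfunction_atTop {P : ℝ[X]} (hP : P.degree ≤ 4) :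
    Tendsto (eigenfunction P) atTop (𝓝 0) := by
  have hdeg : P.degree < (X ^ 5 : ℝ[X]).degree := by
    rw [degree_X_pow]
    exact hP.trans_lt (by norm_num)
  have hquot := (P.div_tendsto_atTop_zero_of_degree_lt _ hdeg).comp tendsto_cosh_half_sq_atTop
  simp only [eval_pow, eval_X] at hquot
  refine squeeze_zero_norm (fun x => abs_eigenfunction_le P x) ?_
  simpa using hquot.abs.const_mul √2

end DunfordSchwartz

open DunfordSchwartz

/-- **Discrete eigenvalues of the Dunford-Schwartz eigenproblem.**
For each `n ∈ {0, 1, 2, 3, 4}` there exists a function `u`, not identically zero on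
`(0, ∞)`, twice continuously differentiable on `(0, ∞)`, satisfying
`-u'' + ((-242 cosh x + 241)/(4 sinh(x)²)) u = -(5 - n)² u` on `(0, ∞)`, together with
the boundary conditions `lim_{x→0⁺} (u(x) + x u'(x)) = 0` and `lim_{x→∞} u(x) = 0`;
that is, the discrete eigenvalues are `λ_n = -(5 - n)²` for `n = 0, 1, 2, 3, 4`. -/
theorem dunford_schwartz_discrete_eigenvalues (n : ℕ) (hn : n ≤ 4) :
    ∃ u : ℝ → ℝ,
      (∃ x : ℝ, 0 < x ∧ u x ≠ 0) ∧
      ContDiffOn ℝ 2 u (Set.Ioi 0) ∧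
      (∀ x : ℝ, 0 < x →
        -(deriv (deriv u) x)
          + ((-242 * Real.cosh x + 241) / (4 * Real.sinh x ^ 2)) * u x
        = -((5 - (n : ℝ)) ^ 2) * u x) ∧
      Filter.Tendsto (fun x : ℝ => u x + x * deriv u x)
        (nhdsWithin 0 (Set.Ioi 0)) (nhds 0) ∧
      Filter.Tendsto u Filter.atTop (nhds 0) := by
  obtain ⟨P, hP, hP0, hdeg⟩ : ∃ P : ℝ[X],
      hypergeometricOp (25 + -(5 - (n : ℝ)) ^ 2) P = 0 ∧ P ≠ 0 ∧ P.degree ≤ 4 := by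
    interval_cases n <;>
      [use 1; use 10 - 9 * X; use 45 - 72 * X + 28 * X ^ 2;
        use 120 - 252 * X + 168 * X ^ 2 - 35 * X ^ 3;
        use 210 - 504 * X + 420 * X ^ 2 - 140 * X ^ 3 + 15 * X ^ 4] <;>
      refine ⟨?_, fun h => by simpa using congrArg (eval 0) h, by compute_degree!⟩ <;>
      simp only [hypergeometricOp, derivative_add, derivative_sub, derivative_mul,
        derivative_X_pow, derivative_X, derivative_ofNat, derivative_one, Nat.cast_ofNat] <;>
      norm_num [C_ofNat] <;>
      ring
  exact ⟨eigenfunction P, exists_pos_eigenfunction_ne_zero hP0, contDiffOn_eigenfunction P 2,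
    fun x hx => eigenfunction_ode hP hx, tendsto_eigenfunction_add_mul_deriv P,
    tendsto_eigenfunction_atTop hdeg⟩
end
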